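/- Let ξ1, ξ2 > 0, n1, n2 ≥ 2, N = n1 + n2, w1 = ξ2/ξ1. Let k ∈ (0, π) and λ = (4/ξ2)·sin²(k/2). For 1 ≤ j ≤ N let M_{1:j} denote the top-left j × j principal submatrix of M and set ψ̃_j(λ) = ξ2^j · det(M_{1:j} − λ·I). Define A(k) = ψ̃_{n1}(λ) − w1·cos(k)·ψ̃_{n1−1}(λ) and B(k) = w1·ψ̃_{n1−1}(λ). Then ξ2^N · det(M − λ·I) · sin(k) = A(k)·sin((n2+1)k) + B(k)·sin(k)·cos((n2+1)k). -/

import Mathlib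

open Matrix Real

/-- The `(n1+n2) × (n1+n2)` two-segment tridiagonal matrix: row `i` (0-based) has
diagonal entry `2/ξ1` and nonzero off-diagonal entries `-1/ξ1` when `i < n1`, and
diagonal entry `2/ξ2` and nonzero off-diagonal entries `-1/ξ2` when `n1 ≤ i`. -/
noncomputable def twoSegMatrix (ξ1 ξ2 : ℝ) (n1 n2 : ℕ) :
    Matrix (Fin (n1 + n2)) (Fin (n1 + n2)) ℝ :=
  Matrix.of fun i j =>
    if (i : ℕ) = (j : ℕ) then 2 / (if (i : ℕ) < n1 then ξ1 else ξ2)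
    else if (i : ℕ) + 1 = (j : ℕ) ∨ (j : ℕ) + 1 = (i : ℕ) then
      -1 / (if (i : ℕ) < n1 then ξ1 else ξ2)
    else 0

/-- `ξ^j · det(A_{1:j} − λ·I)` where `A_{1:j}` is the top-left `j × j` principal
submatrix of `A` (returns `0` for out-of-range `j`). -/
noncomputable def psiTop {N : ℕ} (A : Matrix (Fin N) (Fin N) ℝ) (ξ lam : ℝ) (j : ℕ) : ℝ :=
  if h : j ≤ N then
    ξ ^ j *
      (A.submatrix (Fin.castLE h) (Fin.castLE h) -
        lam • (1 : Matrix (Fin j) (Fin j) ℝ)).det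
  else 0

/-! Expanding `det (M_{1:j+2} - λ)` along its last row gives, for `n1 ≤ j + 1`, the three-term
recurrence `ψ̃_{j+2} = (2 - ξ2 λ) ψ̃_{j+1} - (ξ2 / c) ψ̃_j`, with `c = ξ1` at the interface row
`j = n1 - 1` and `c = ξ2` beyond it. The choice `λ = (4/ξ2) sin² (k/2)` makes `2 - ξ2 λ = 2 cos k`,
so from `ψ̃_{n1}` on the sequence obeys the Chebyshev recurrence, whose solutions are
`u_m sin k = u_0 sin ((m+1)k) - u_{-1} sin (m k)`; the interface step supplies
`u_{-1} = w1 ψ̃_{n1-1}`, and expanding `sin (n2 k)` gives the stated phase form. -/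

namespace Matrix

def IsTridiagonal {α : Type*} [Zero α] {n : ℕ} (A : Matrix (Fin n) (Fin n) α) : Prop :=
  ∀ i j : Fin n, (i : ℕ) + 1 < j ∨ (j : ℕ) + 1 < i → A i j = 0

theorem IsTridiagonal.submatrix_castLE {α : Type*} [Zero α] {n m : ℕ}
    {A : Matrix (Fin n) (Fin n) α} (hA : A.IsTridiagonal) (h : m ≤ n) :
    (A.submatrix (Fin.castLE h) (Fin.castLE h)).IsTridiagonal :=
  fun i j => hA (Fin.castLE h i) (Fin.castLE h j)

theorem IsTridiagonal.sub_smul_one {R : Type*} [Ring R] {n : ℕ} {A : Matrix (Fin n) (Fin n) R}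
    (hA : A.IsTridiagonal) (lam : R) : (A - lam • 1).IsTridiagonal := fun i j hij => by
  have hne : i ≠ j := fun h => by subst h; omega
  simp [hA i j hij, one_apply_ne hne]

theorem IsTridiagonal.det_eq {R : Type*} [CommRing R] {n : ℕ}
    {B : Matrix (Fin (n + 2)) (Fin (n + 2)) R} (hB : B.IsTridiagonal) :
    B.det = B (Fin.last _) (Fin.last _) * (B.submatrix Fin.castSucc Fin.castSucc).det
      - B (Fin.last _) (Fin.last n).castSucc * B (Fin.last n).castSucc (Fin.last _) *
        (B.submatrix (Fin.castSucc ∘ Fin.castSucc) (Fin.castSucc ∘ Fin.castSucc)).det := by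
  have hrow (i : Fin n) : B (Fin.last _) i.castSucc.castSucc = 0 :=
    hB _ _ (Or.inr (by simp))
  have hcol (i : Fin n) : B i.castSucc.castSucc (Fin.last _) = 0 :=
    hB _ _ (Or.inl (by simp))
  have hminor : (B.submatrix Fin.castSucc (Fin.last n).castSucc.succAbove).det =
      B (Fin.last n).castSucc (Fin.last _) *
        (B.submatrix (Fin.castSucc ∘ Fin.castSucc) (Fin.castSucc ∘ Fin.castSucc)).det := by
    have hcols : (Fin.last n).castSucc.succAbove ∘ Fin.castSucc =
        (Fin.castSucc ∘ Fin.castSucc : Fin n → Fin (n + 2)) :=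
      funext fun i => Fin.succAbove_castSucc_of_lt _ _ (Fin.castSucc_lt_last i)
    rw [det_succ_column _ (Fin.last n), Fin.sum_univ_castSucc]
    simp [Fin.succAbove_last, submatrix_submatrix, hcols, hcol]
  rw [det_succ_row _ (Fin.last _), Fin.sum_univ_castSucc, Fin.sum_univ_castSucc]
  simp only [Fin.val_last, Fin.val_castSucc, hrow, mul_zero, Fin.succAbove_last, zero_mul,
    Finset.sum_const_zero, odd_add_one_self, Odd.neg_one_pow, neg_mul, one_mul, hminor, zero_add,
    Even.add_self, Even.neg_pow, one_pow]
  ring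

theorem submatrix_sub_smul_one_submatrix {R : Type*} [Ring R] {m n o : Type*}
    [DecidableEq m] [DecidableEq n] (A : Matrix o o R) (lam : R) (f : n → o) (g : m → n)
    (hg : Function.Injective g) :
    (A.submatrix f f - lam • 1).submatrix g g = A.submatrix (f ∘ g) (f ∘ g) - lam • 1 := by
  ext i j
  simp [one_apply, hg.eq_iff]

end Matrix

theorem psiTop_add_two {N : ℕ} {A : Matrix (Fin N) (Fin N) ℝ} (hA : A.IsTridiagonal)
    (ξ lam : ℝ) {j : ℕ} (hj : j + 2 ≤ N) :
    psiTop A ξ lam (j + 2) =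
      ξ * (A ⟨j + 1, by omega⟩ ⟨j + 1, by omega⟩ - lam) * psiTop A ξ lam (j + 1)
        - ξ ^ 2 * A ⟨j + 1, by omega⟩ ⟨j, by omega⟩ * A ⟨j, by omega⟩ ⟨j + 1, by omega⟩ *
          psiTop A ξ lam j := by
  set B := A.submatrix (Fin.castLE hj) (Fin.castLE hj) - lam • (1 : Matrix (Fin (j + 2)) _ ℝ)
  have hlead₁ : B.submatrix Fin.castSucc Fin.castSucc =
      A.submatrix (Fin.castLE (by omega)) (Fin.castLE (by omega)) - lam • 1 := by
    rw [submatrix_sub_smul_one_submatrix _ _ _ _ (Fin.castSucc_injective _),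
      Fin.castLE_comp_castSucc]
  have hlead₀ : B.submatrix (Fin.castSucc ∘ Fin.castSucc) (Fin.castSucc ∘ Fin.castSucc) =
      A.submatrix (Fin.castLE (by omega)) (Fin.castLE (by omega)) - lam • 1 := by
    rw [submatrix_sub_smul_one_submatrix _ _ _ _
      ((Fin.castSucc_injective _).comp (Fin.castSucc_injective _)), ← Function.comp_assoc,
      Fin.castLE_comp_castSucc, Fin.castLE_comp_castSucc]
  have hlast : Fin.castLE hj (Fin.last (j + 1)) = ⟨j + 1, by omega⟩ := rfl
  have hprev : Fin.castLE hj (Fin.last j).castSucc = ⟨j, by omega⟩ := rfl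
  simp only [psiTop, dif_pos hj, dif_pos (show j + 1 ≤ N by omega),
    dif_pos (show j ≤ N by omega)]
  rw [((hA.submatrix_castLE hj).sub_smul_one lam).det_eq, hlead₁, hlead₀]
  have hne := (Fin.castSucc_lt_last (Fin.last j)).ne
  simp only [Matrix.sub_apply, submatrix_apply, Matrix.smul_apply, hlast, hprev, one_apply_eq,
    one_apply_ne hne, one_apply_ne hne.symm]
  ring

theorem psiTop_self {N : ℕ} (A : Matrix (Fin N) (Fin N) ℝ) (ξ lam : ℝ) :
    psiTop A ξ lam N = ξ ^ N * (A - lam • 1).det := by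
  simp [psiTop, Fin.castLE_rfl]

theorem twoSegMatrix_isTridiagonal (ξ1 ξ2 : ℝ) (n1 n2 : ℕ) :
    (twoSegMatrix ξ1 ξ2 n1 n2).IsTridiagonal := fun i j hij => by
  rw [twoSegMatrix, of_apply, if_neg (by omega), if_neg (by omega)]

theorem psiTop_twoSegMatrix_add_two {ξ2 : ℝ} (hξ2 : ξ2 ≠ 0) (ξ1 lam : ℝ) {n1 n2 j : ℕ}
    (hj1 : n1 ≤ j + 1) (hj2 : j + 2 ≤ n1 + n2) :
    psiTop (twoSegMatrix ξ1 ξ2 n1 n2) ξ2 lam (j + 2) =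
      (2 - ξ2 * lam) * psiTop (twoSegMatrix ξ1 ξ2 n1 n2) ξ2 lam (j + 1)
        - ξ2 / (if j < n1 then ξ1 else ξ2) * psiTop (twoSegMatrix ξ1 ξ2 n1 n2) ξ2 lam j := by
  rw [psiTop_add_two (twoSegMatrix_isTridiagonal ξ1 ξ2 n1 n2) _ _ hj2]
  simp only [twoSegMatrix, of_apply, ↓reduceIte,
    show ¬j + 1 < n1 by omega, Nat.add_eq_left, one_ne_zero, or_true, Nat.left_eq_add, true_or]
  field_simp

theorem sin_add_eq_two_mul_cos_mul_sin_sub (x k : ℝ) :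
    sin (x + k) = 2 * cos k * sin x - sin (x - k) := by
  rw [sin_add, sin_sub]
  ring

/-- `v` plays the role of `u (-1)`. -/
theorem mul_sin_eq_of_chebyshev_rec {u : ℕ → ℝ} {v k : ℝ} {n : ℕ}
    (h1 : u 1 = 2 * cos k * u 0 - v)
    (hrec : ∀ m, m + 2 ≤ n → u (m + 2) = 2 * cos k * u (m + 1) - u m) :
    ∀ m ≤ n, u m * sin k = u 0 * sin ((m + 1) * k) - v * sin (m * k) := by
  intro m
  induction m using Nat.twoStepInduction with
  | zero => simp
  | one =>
    intro _
    rw [h1]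
    push_cast
    rw [one_add_one_eq_two, one_mul, sin_two_mul]
    ring
  | more m ih0 ih1 =>
    intro hm
    rw [hrec m hm]
    push_cast at ih0 ih1 ⊢
    linear_combination (norm := ring_nf) 2 * cos k * ih1 (by omega) - ih0 (by omega)
      - u 0 * sin_add_eq_two_mul_cos_mul_sin_sub ((m + 2) * k) k
      + v * sin_add_eq_two_mul_cos_mul_sin_sub ((m + 1) * k) k

theorem twoSeg_phase_decomposition_general (ξ1 ξ2 : ℝ) (hξ2 : 0 < ξ2)
    (n1 n2 : ℕ) (hn1 : 2 ≤ n1) (hn2 : 2 ≤ n2) (k : ℝ) :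
    let lam := (4 / ξ2) * Real.sin (k / 2) ^ 2
    let M := twoSegMatrix ξ1 ξ2 n1 n2
    let A := psiTop M ξ2 lam n1 - (ξ2 / ξ1) * Real.cos k * psiTop M ξ2 lam (n1 - 1)
    let B := (ξ2 / ξ1) * psiTop M ξ2 lam (n1 - 1)
    ξ2 ^ (n1 + n2) *
        (M - lam • (1 : Matrix (Fin (n1 + n2)) (Fin (n1 + n2)) ℝ)).det * Real.sin k =
      A * Real.sin ((n2 + 1) * k) + B * Real.sin k * Real.cos ((n2 + 1) * k) := by
  intro lam M A B
  have hcos : 2 - ξ2 * lam = 2 * cos k := by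
    have hk : 2 * (k / 2) = k := by ring
    simp only [lam]
    rw [sin_sq_eq_half_sub, hk]
    field_simp
    ring
  have hinterface : psiTop M ξ2 lam (n1 + 1) = 2 * cos k * psiTop M ξ2 lam (n1 + 0) - B := by
    have h := psiTop_twoSegMatrix_add_two hξ2.ne' ξ1 lam (n1 := n1) (n2 := n2) (j := n1 - 1)
      (by omega) (by omega)
    rwa [if_pos (by omega), show n1 - 1 + 2 = n1 + 1 by omega, show n1 - 1 + 1 = n1 + 0 by omega,
      hcos] at h
  have hbulk (m : ℕ) (hm : m + 2 ≤ n2) : psiTop M ξ2 lam (n1 + (m + 2)) =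
      2 * cos k * psiTop M ξ2 lam (n1 + (m + 1)) - psiTop M ξ2 lam (n1 + m) := by
    have h := psiTop_twoSegMatrix_add_two hξ2.ne' ξ1 lam (n1 := n1) (n2 := n2) (j := n1 + m)
      (by omega) (by omega)
    rwa [if_neg (by omega), div_self hξ2.ne', one_mul, hcos] at h
  have hchebyshev := mul_sin_eq_of_chebyshev_rec (u := fun m => psiTop M ξ2 lam (n1 + m))
    hinterface hbulk n2 le_rfl
  have hsin : sin (n2 * k) = sin ((n2 + 1) * k) * cos k - cos ((n2 + 1) * k) * sin k := by
    rw [← sin_sub]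
    ring_nf
  simp only [add_zero, psiTop_self] at hchebyshev
  linear_combination hchebyshev - B * hsin

theorem twoSeg_phase_decomposition (ξ1 ξ2 : ℝ) (hξ1 : 0 < ξ1) (hξ2 : 0 < ξ2)
    (n1 n2 : ℕ) (hn1 : 2 ≤ n1) (hn2 : 2 ≤ n2) (k : ℝ) (hk : k ∈ Set.Ioo 0 π) :
    let lam := (4 / ξ2) * Real.sin (k / 2) ^ 2
    let M := twoSegMatrix ξ1 ξ2 n1 n2
    let A := psiTop M ξ2 lam n1 - (ξ2 / ξ1) * Real.cos k * psiTop M ξ2 lam (n1 - 1)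
    let B := (ξ2 / ξ1) * psiTop M ξ2 lam (n1 - 1)
    ξ2 ^ (n1 + n2) *
        (M - lam • (1 : Matrix (Fin (n1 + n2)) (Fin (n1 + n2)) ℝ)).det * Real.sin k =
      A * Real.sin ((n2 + 1) * k) + B * Real.sin k * Real.cos ((n2 + 1) * k) :=
  twoSeg_phase_decomposition_general ξ1 ξ2 hξ2 n1 n2 hn1 hn2 k
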